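/- (Proposition 2.2 (ii): selfadjointness.) For all f, g ∈ L²_M one has ⟨Q f, g⟩_M = ⟨f, Q g⟩_M, that is, ∑' n, ∫ p, (Q f n p) * g n p / M n p = ∑' n, ∫ p, f n p * (Q g n p) / M n p. -/

import Mathlib

open MeasureTheory Real

/-!
Regard `ℕ × ℝ` with counting ⊗ Lebesgue measure as a single measure space and write `x, y` for
its points. Then
`⟨Q f, g⟩_M = ∬ α(x,y) g(x) f(y) - ∬ α(x,y) M(y) f(x) g(x) / M(x)`.
The second double integral is symmetric in `f, g`; the first becomes the corresponding one for
`⟨Q g, f⟩_M` after swapping `x` and `y`, since `α(x,y) = α(y,x)`. Fubini applies because `α` is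
bounded and `f`, `g`, `f g / M`, `M` are integrable: for `f, g ∈ L²_M` this follows from
`|f| ≤ (f² / M + M) / 2` and `|f g| / M ≤ (f² / M + g² / M) / 2`.
-/

open Function

theorem abs_le_sq_div_add_div_two {t m : ℝ} (hm : 0 < m) : |t| ≤ (t ^ 2 / m + m) / 2 := by
  rw [div_add' _ _ _ hm.ne', div_div, le_div_iff₀ (by positivity)]
  nlinarith [sq_nonneg (|t| - m), sq_abs t]

theorem abs_mul_div_le_sq_div_add_sq_div {a b m : ℝ} (hm : 0 < m) :
    |a * b / m| ≤ (a ^ 2 / m + b ^ 2 / m) / 2 := by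
  rw [abs_div, abs_of_pos hm, ← add_div, div_div, div_le_div_iff₀ hm (by positivity)]
  nlinarith [two_mul_le_add_sq |a| |b|, sq_abs a, sq_abs b, abs_mul a b]

theorem integrable_exp_neg_sq_div_add {m : ℝ} (hm : 0 < m) (e c : ℝ) :
    Integrable fun p : ℝ => exp (-(p ^ 2 / (2 * m) + e)) / c := by
  convert (integrable_exp_neg_mul_sq (b := (2 * m)⁻¹) (by positivity)).mul_const (exp (-e) / c)
    using 1
  ext p
  rw [← mul_div_assoc, ← exp_add]
  ring_nf

section WeightedL2

variable {X : Type*} [MeasurableSpace X] {μ : Measure X} {M f g : X → ℝ}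

theorem integrable_of_integrable_sq_div (hM : ∀ x, 0 < M x) (hMi : Integrable M μ)
    (hf : AEMeasurable f μ) (hf2 : Integrable (fun x => f x ^ 2 / M x) μ) : Integrable f μ :=
  ((hf2.add hMi).div_const 2).mono' hf.aestronglyMeasurable
    (ae_of_all _ fun x => abs_le_sq_div_add_div_two (hM x))

theorem integrable_mul_div_of_integrable_sq_div (hM : ∀ x, 0 < M x) (hMm : AEMeasurable M μ)
    (hf : AEMeasurable f μ) (hg : AEMeasurable g μ) (hf2 : Integrable (fun x => f x ^ 2 / M x) μ)
    (hg2 : Integrable (fun x => g x ^ 2 / M x) μ) : Integrable (fun x => f x * g x / M x) μ :=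
  ((hf2.add hg2).div_const 2).mono' ((hf.mul hg).div hMm).aestronglyMeasurable
    (ae_of_all _ fun x => abs_mul_div_le_sq_div_add_sq_div (hM x))

end WeightedL2

section Collision

variable {X : Type*} [MeasurableSpace X] {μ : Measure X} {a : X → X → ℝ} {M f g u v : X → ℝ}
  {C : ℝ}

noncomputable def bgkCollision (μ : Measure X) (a : X → X → ℝ) (M f : X → ℝ) (x : X) : ℝ :=
  ∫ y, a x y * (M x * f y - M y * f x) ∂μ

theorem integrable_bgkCollision_integrand (ha : Measurable (uncurry a))
    (hC : ∀ x y, |a x y| ≤ C) (hM : Integrable M μ) (hf : Integrable f μ) (x : X) :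
    Integrable (fun y => a x y * (M x * f y - M y * f x)) μ :=
  ((hf.const_mul (M x)).sub (hM.mul_const (f x))).bdd_mul ha.of_uncurry_left.aestronglyMeasurable
    (ae_of_all _ fun y => hC x y)

theorem integrable_kernel_mul_prod (ha : Measurable (uncurry a)) (hC : ∀ x y, |a x y| ≤ C)
    (hu : Integrable u μ) (hv : Integrable v μ) :
    Integrable (fun z : X × X => a z.1 z.2 * (u z.1 * v z.2)) (μ.prod μ) :=
  (hu.mul_prod hv).bdd_mul ha.aestronglyMeasurable (ae_of_all _ fun z => hC z.1 z.2)

theorem bgkCollision_mul_div_eq_integral {x : X} (hMx : M x ≠ 0) :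
    bgkCollision μ a M f x * g x / M x =
      ∫ y, (a x y * (g x * f y) - a x y * (f x * g x / M x * M y)) ∂μ := by
  rw [bgkCollision, mul_div_assoc, ← integral_mul_const]
  congr 1 with y
  field_simp

variable [SFinite μ]

theorem integrable_bgkCollision_mul_div (ha : Measurable (uncurry a)) (hC : ∀ x y, |a x y| ≤ C)
    (hM0 : ∀ x, M x ≠ 0) (hM : Integrable M μ) (hf : Integrable f μ) (hg : Integrable g μ)
    (hfg : Integrable (fun x => f x * g x / M x) μ) :
    Integrable (fun x => bgkCollision μ a M f x * g x / M x) μ := by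
  simp_rw [bgkCollision_mul_div_eq_integral (hM0 _)]
  exact ((integrable_kernel_mul_prod ha hC hg hf).sub
    (integrable_kernel_mul_prod ha hC hfg hM)).integral_prod_left

theorem integral_bgkCollision_mul_div (ha : Measurable (uncurry a)) (hC : ∀ x y, |a x y| ≤ C)
    (hM0 : ∀ x, M x ≠ 0) (hM : Integrable M μ) (hf : Integrable f μ) (hg : Integrable g μ)
    (hfg : Integrable (fun x => f x * g x / M x) μ) :
    ∫ x, bgkCollision μ a M f x * g x / M x ∂μ =
      (∫ z, a z.1 z.2 * (g z.1 * f z.2) ∂μ.prod μ) -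
        ∫ z, a z.1 z.2 * (f z.1 * g z.1 / M z.1 * M z.2) ∂μ.prod μ := by
  have hA := integrable_kernel_mul_prod ha hC hg hf
  have hB := integrable_kernel_mul_prod ha hC hfg hM
  simp_rw [bgkCollision_mul_div_eq_integral (hM0 _)]
  rw [← integral_sub hA hB]
  exact (integral_prod _ (hA.sub hB)).symm

theorem integral_bgkCollision_mul_div_comm (ha : Measurable (uncurry a))
    (hC : ∀ x y, |a x y| ≤ C) (hsym : ∀ x y, a x y = a y x) (hM0 : ∀ x, M x ≠ 0)
    (hM : Integrable M μ) (hf : Integrable f μ) (hg : Integrable g μ)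
    (hfg : Integrable (fun x => f x * g x / M x) μ) :
    ∫ x, bgkCollision μ a M f x * g x / M x ∂μ = ∫ x, bgkCollision μ a M g x * f x / M x ∂μ := by
  have hgf : Integrable (fun x => g x * f x / M x) μ := by simpa only [mul_comm] using hfg
  rw [integral_bgkCollision_mul_div ha hC hM0 hM hf hg hfg,
    integral_bgkCollision_mul_div ha hC hM0 hM hg hf hgf, ← integral_prod_swap]
  simp_rw [Prod.fst_swap, Prod.snd_swap, hsym _ _, mul_comm (f _) (g _)]

end Collision

section CountableProduct

variable {ι Y : Type*} [Countable ι] [MeasurableSpace ι] [MeasurableSingletonClass ι]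
  [MeasurableSpace Y]

theorem measurable_uncurry_of_measurable_slices {κ : ι → ι → Y → Y → ℝ}
    (hκ : ∀ i j, Measurable fun q : Y × Y => κ i j q.1 q.2) :
    Measurable (uncurry fun x y : ι × Y => κ x.1 y.1 x.2 y.2) :=
  (measurable_from_prod_countable_right (f := fun w : (ι × ι) × Y × Y => κ w.1.1 w.1.2 w.2.1 w.2.2)
    fun ij => hκ ij.1 ij.2).comp
    ((measurable_fst.fst.prodMk measurable_snd.fst).prodMk
      (measurable_fst.snd.prodMk measurable_snd.snd))

def MemWeightedL2 (ν : Measure Y) (M f : ι → Y → ℝ) : Prop :=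
  (∀ i, Measurable (f i)) ∧ (∀ i, Integrable (fun y => f i y ^ 2 / M i y) ν) ∧
    Summable fun i => ∫ y, f i y ^ 2 / M i y ∂ν

variable {ν : Measure Y} {M f g : ι → Y → ℝ}

theorem MemWeightedL2.aemeasurable_uncurry (hf : MemWeightedL2 ν M f) :
    AEMeasurable (uncurry f) (Measure.count.prod ν) :=
  (measurable_from_prod_countable_right hf.1).aemeasurable

variable [SFinite ν]

theorem integral_count_prod {E : Type*} [NormedAddCommGroup E] [NormedSpace ℝ E]
    [CompleteSpace E] {F : ι × Y → E} (hF : Integrable F (Measure.count.prod ν)) :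
    ∫ x, F x ∂Measure.count.prod ν = ∑' i, ∫ y, F (i, y) ∂ν := by
  rw [integral_prod F hF, integral_countable hF.integral_prod_left]
  simp

theorem integrable_count_prod_of_nonneg {F : ι → Y → ℝ} (hFm : ∀ i, Measurable (F i))
    (hF0 : ∀ i y, 0 ≤ F i y) (hF : ∀ i, Integrable (F i) ν)
    (hsum : Summable fun i => ∫ y, F i y ∂ν) :
    Integrable (uncurry F) (Measure.count.prod ν) := by
  rw [integrable_prod_iff
    (measurable_from_prod_countable_right (f := uncurry F) hFm).aestronglyMeasurable]
  refine ⟨ae_of_all _ hF, integrable_count_iff.2 (hsum.congr fun i => ?_)⟩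
  have hFi : ∀ y, ‖F i y‖ = F i y := fun y => Real.norm_of_nonneg (hF0 i y)
  simp only [uncurry_apply_pair, hFi, Real.norm_of_nonneg (integral_nonneg (f := F i) (hF0 i))]

theorem MemWeightedL2.integrable_uncurry_sq_div (hf : MemWeightedL2 ν M f)
    (hMpos : ∀ i y, 0 < M i y) (hMm : ∀ i, Measurable (M i)) :
    Integrable (fun x => uncurry f x ^ 2 / uncurry M x) (Measure.count.prod ν) :=
  integrable_count_prod_of_nonneg (fun i => ((hf.1 i).pow_const 2).div (hMm i))
    (fun i y => div_nonneg (sq_nonneg _) (hMpos i y).le) hf.2.1 hf.2.2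

theorem MemWeightedL2.integrable_uncurry (hf : MemWeightedL2 ν M f) (hMpos : ∀ i y, 0 < M i y)
    (hMm : ∀ i, Measurable (M i)) (hM : Integrable (uncurry M) (Measure.count.prod ν)) :
    Integrable (uncurry f) (Measure.count.prod ν) :=
  integrable_of_integrable_sq_div (fun x => hMpos x.1 x.2) hM hf.aemeasurable_uncurry
    (hf.integrable_uncurry_sq_div hMpos hMm)

theorem MemWeightedL2.integrable_uncurry_mul_div (hf : MemWeightedL2 ν M f)
    (hg : MemWeightedL2 ν M g) (hMpos : ∀ i y, 0 < M i y) (hMm : ∀ i, Measurable (M i)) :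
    Integrable (fun x => uncurry f x * uncurry g x / uncurry M x) (Measure.count.prod ν) :=
  integrable_mul_div_of_integrable_sq_div (fun x => hMpos x.1 x.2)
    (measurable_from_prod_countable_right hMm).aemeasurable hf.aemeasurable_uncurry
    hg.aemeasurable_uncurry (hf.integrable_uncurry_sq_div hMpos hMm)
    (hg.integrable_uncurry_sq_div hMpos hMm)

theorem tsum_integral_collision_mul_div_comm {κ : ι → ι → Y → Y → ℝ} {C : ℝ}
    {Q : (ι → Y → ℝ) → ι → Y → ℝ}
    (hκm : ∀ i j, Measurable fun q : Y × Y => κ i j q.1 q.2) (hκC : ∀ i j y y', |κ i j y y'| ≤ C)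
    (hκsym : ∀ i j y y', κ i j y y' = κ j i y' y) (hMpos : ∀ i y, 0 < M i y)
    (hMm : ∀ i, Measurable (M i)) (hM : Integrable (uncurry M) (Measure.count.prod ν))
    (hQ : ∀ u i y, Q u i y = ∑' j, ∫ y', κ i j y y' * (M i y * u j y' - M j y' * u i y) ∂ν)
    (hf : MemWeightedL2 ν M f) (hg : MemWeightedL2 ν M g) :
    ∑' i, ∫ y, Q f i y * g i y / M i y ∂ν = ∑' i, ∫ y, f i y * Q g i y / M i y ∂ν := by
  set μ := (Measure.count : Measure ι).prod ν
  set a : ι × Y → ι × Y → ℝ := fun x y => κ x.1 y.1 x.2 y.2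
  have ha : Measurable (uncurry a) := measurable_uncurry_of_measurable_slices hκm
  have hC : ∀ x y, |a x y| ≤ C := fun _ _ => hκC _ _ _ _
  have hM0 : ∀ x, uncurry M x ≠ 0 := fun x => (hMpos x.1 x.2).ne'
  have hfi := hf.integrable_uncurry hMpos hMm hM
  have hgi := hg.integrable_uncurry hMpos hMm hM
  have hQ_eq : ∀ u, Integrable (uncurry u) μ →
      ∀ i y, Q u i y = bgkCollision μ a (uncurry M) (uncurry u) (i, y) := fun u hu i y =>
    (hQ u i y).trans
      (integral_count_prod (integrable_bgkCollision_integrand ha hC hM hu (i, y))).symm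
  simp_rw [mul_comm (f _ _) (Q g _ _), hQ_eq f hfi, hQ_eq g hgi]
  calc _ = ∫ x, bgkCollision μ a (uncurry M) (uncurry f) x * uncurry g x / uncurry M x ∂μ :=
        (integral_count_prod (integrable_bgkCollision_mul_div ha hC hM0 hM hfi hgi
          (hf.integrable_uncurry_mul_div hg hMpos hMm))).symm
    _ = ∫ x, bgkCollision μ a (uncurry M) (uncurry g) x * uncurry f x / uncurry M x ∂μ :=
        integral_bgkCollision_mul_div_comm ha hC (fun _ _ => hκsym _ _ _ _) hM0 hM hfi hgi
          (hf.integrable_uncurry_mul_div hg hMpos hMm)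
    _ = _ := integral_count_prod (integrable_bgkCollision_mul_div ha hC hM0 hM hgi hfi
          (hg.integrable_uncurry_mul_div hf hMpos hMm))

end CountableProduct

theorem stmt5_general
    (m ε : ℕ → ℝ)
    (hm : ∀ n, 0 < m n)
    (hε : Summable fun n => Real.exp (-ε n))
    (Z : ℝ) (hZ : Z = ∑' n, Real.exp (-ε n))
    (M : ℕ → ℝ → ℝ)
    (hM : ∀ n p, M n p =
      Real.exp (-(p ^ 2 / (2 * m n) + ε n)) / (Real.sqrt (2 * Real.pi * m n) * Z))
    (hMnorm : (∑' n, ∫ p, M n p) = 1)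
    (α : ℕ → ℕ → ℝ → ℝ → ℝ)
    (hαmeas : ∀ n n', Measurable fun q : ℝ × ℝ => α n n' q.1 q.2)
    (α₁ α₂ : ℝ)
    (hsym : ∀ n n' p p', α n n' p p' = α n' n p' p)
    (hbd : ∀ n n' p p', α₁ ≤ α n n' p p' ∧ α n n' p p' ≤ α₂)
    (Q : (ℕ → ℝ → ℝ) → ℕ → ℝ → ℝ)
    (hQ : ∀ f n p, Q f n p =
      ∑' n', ∫ p', α n n' p p' * (M n p * f n' p' - M n' p' * f n p))
    (memL2M : (ℕ → ℝ → ℝ) → Prop)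
    (hmem : ∀ f, memL2M f ↔ (∀ n, Measurable (f n)) ∧
      (∀ n, Integrable fun p => f n p ^ 2 / M n p) ∧
      (Summable fun n => ∫ p, f n p ^ 2 / M n p)) :
    ∀ f g, memL2M f → memL2M g →
      (∑' n, ∫ p, Q f n p * g n p / M n p) =
        (∑' n, ∫ p, f n p * Q g n p / M n p) := by
  intro f g hf hg
  have hZpos : 0 < Z := hZ ▸ hε.tsum_pos (fun n => (exp_pos _).le) 0 (exp_pos _)
  have hMpos : ∀ n p, 0 < M n p := fun n p => by
    have := hm n
    rw [hM]
    positivity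
  have hMm : ∀ n, Measurable (M n) := fun n => by
    rw [funext (hM n)]
    fun_prop
  have hMsum : Summable fun n => ∫ p, M n p := by
    by_contra hns
    rw [tsum_eq_zero_of_not_summable hns] at hMnorm
    exact zero_ne_one hMnorm
  have hMint : Integrable (uncurry M) (Measure.count.prod volume) :=
    integrable_count_prod_of_nonneg hMm (fun n p => (hMpos n p).le)
      (fun n => funext (hM n) ▸ integrable_exp_neg_sq_div_add (hm n) _ _) hMsum
  exact tsum_integral_collision_mul_div_comm hαmeas
    (fun _ _ _ _ => abs_le_max_abs_abs (hbd _ _ _ _).1 (hbd _ _ _ _).2) hsym hMpos hMm hMint hQ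
    ((hmem f).1 hf) ((hmem g).1 hg)

theorem stmt5
    (m ε : ℕ → ℝ)
    (hm : ∀ n, 0 < m n)
    (hε : Summable fun n => Real.exp (-ε n))
    (Z : ℝ) (hZ : Z = ∑' n, Real.exp (-ε n))
    (M : ℕ → ℝ → ℝ)
    (hM : ∀ n p, M n p =
      Real.exp (-(p ^ 2 / (2 * m n) + ε n)) / (Real.sqrt (2 * Real.pi * m n) * Z))
    (hMnorm : (∑' n, ∫ p, M n p) = 1)
    (α : ℕ → ℕ → ℝ → ℝ → ℝ)
    (hαmeas : ∀ n n', Measurable fun q : ℝ × ℝ => α n n' q.1 q.2)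
    (α₁ α₂ : ℝ) (hα₁ : 0 < α₁) (hα₁₂ : α₁ ≤ α₂)
    (hsym : ∀ n n' p p', α n n' p p' = α n' n p' p)
    (hbd : ∀ n n' p p', α₁ ≤ α n n' p p' ∧ α n n' p p' ≤ α₂)
    (Q : (ℕ → ℝ → ℝ) → ℕ → ℝ → ℝ)
    (hQ : ∀ f n p, Q f n p =
      ∑' n', ∫ p', α n n' p p' * (M n p * f n' p' - M n' p' * f n p))
    (memL2M : (ℕ → ℝ → ℝ) → Prop)
    (hmem : ∀ f, memL2M f ↔ (∀ n, Measurable (f n)) ∧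
      (∀ n, Integrable fun p => f n p ^ 2 / M n p) ∧
      (Summable fun n => ∫ p, f n p ^ 2 / M n p))
    (nrm : (ℕ → ℝ → ℝ) → ℝ)
    (hnrm : ∀ f, nrm f = (∑' n, ∫ p, f n p ^ 2 / M n p) ^ ((1 : ℝ) / 2)) :
    ∀ f g, memL2M f → memL2M g →
      (∑' n, ∫ p, Q f n p * g n p / M n p) =
        (∑' n, ∫ p, f n p * Q g n p / M n p) :=
  stmt5_general m ε hm hε Z hZ M hM hMnorm α hαmeas α₁ α₂ hsym hbd Q hQ memL2M hmem
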